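/- arXiv:1306.3877 — 5 statements merged into one kernel-verified Lean document; each statement's English description precedes it below -/
import Mathlib

section
/- Let G be a finite simple undirected graph, let v be a vertex of G, and let H_v be the auxiliary graph of v. If S is a modulator of G with v ∉ S, then S ∩ (N1 ∪ N2) is a vertex cover of H_v (in particular, S contains a vertex cover of H_v). -/
/-
Every edge `ab` of `H_v` spans, together with `v`, an induced path on three vertices of `G`:
`a - v - b` when `a, b ∈ N1` are non-adjacent, and `v - a - b` when `a ∈ N1`, `b ∈ N2`.
A modulator meets every such path, and it avoids `v`, so it contains `a` or `b`.
-/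

variable {V : Type*}

/-- The graph obtained from `G` by deleting the vertex set `S`
(deleted vertices become isolated, which does not affect cluster-ness of the rest). -/
def SimpleGraph.deleteSet (G : SimpleGraph V) (S : Set V) : SimpleGraph V where
  Adj a b := G.Adj a b ∧ a ∉ S ∧ b ∉ S
  symm := by
    constructor
    intro a b h
    exact ⟨h.1.symm, h.2.2, h.2.1⟩
  loopless := by
    constructor
    intro a h
    exact G.irrefl h.1

/-- `(u, v, w)` is a `P₃` in `G`: an induced path on the three distinct vertices
`u`, `v`, `w` with edges `uv` and `vw` and non-edge `uw`. -/
def IsP3 (G : SimpleGraph V) (u v w : V) : Prop :=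
  G.Adj u v ∧ G.Adj v w ∧ ¬ G.Adj u w ∧ u ≠ w

/-- A cluster graph is a graph containing no `P₃`. -/
def IsClusterGraph (G : SimpleGraph V) : Prop :=
  ∀ u v w : V, ¬ IsP3 G u v w

/-- `S` is a modulator of `G`: deleting `S` from `G` yields a cluster graph. -/
def IsModulator (G : SimpleGraph V) (S : Set V) : Prop :=
  IsClusterGraph (G.deleteSet S)

/-- A solution is a modulator of minimum cardinality. -/
def IsSolution (G : SimpleGraph V) (S : Set V) : Prop :=
  IsModulator G S ∧ ∀ T : Set V, IsModulator G T → S.ncard ≤ T.ncard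

/-- `N1 G v` is the neighbourhood of `v` in `G`. -/
def N1 (G : SimpleGraph V) (v : V) : Set V := G.neighborSet v

/-- `N2 G v = N_G(N_G[v])` is the set of vertices at distance exactly `2` from `v`. -/
def N2 (G : SimpleGraph V) (v : V) : Set V :=
  {w | w ≠ v ∧ ¬ G.Adj v w ∧ ∃ u, G.Adj v u ∧ G.Adj u w}

/-- Adjacency in the auxiliary graph `H_v`: non-edges of `G` inside `N1`,
and edges of `G` between `N1` and `N2`. -/
def HvAdj (G : SimpleGraph V) (v a b : V) : Prop :=
  (a ∈ N1 G v ∧ b ∈ N1 G v ∧ a ≠ b ∧ ¬ G.Adj a b) ∨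
  (a ∈ N1 G v ∧ b ∈ N2 G v ∧ G.Adj a b) ∨
  (b ∈ N1 G v ∧ a ∈ N2 G v ∧ G.Adj a b)

/-- `X` is a vertex cover of the auxiliary graph `H_v`: a subset of
`V(H_v) = N1 ∪ N2` meeting every edge of `H_v`. -/
def IsVCHv (G : SimpleGraph V) (v : V) (X : Set V) : Prop :=
  X ⊆ N1 G v ∪ N2 G v ∧ ∀ a b : V, HvAdj G v a b → a ∈ X ∨ b ∈ X

/-- `X` is a vertex cover of the graph `H`. -/
def IsVC (H : SimpleGraph V) (X : Set V) : Prop :=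
  ∀ a b : V, H.Adj a b → a ∈ X ∨ b ∈ X

/-- The connected component of `v` in `G` is a clique. -/
def ComponentIsClique (G : SimpleGraph V) (v : V) : Prop :=
  ∀ u w : V, G.Reachable v u → G.Reachable v w → u ≠ w → G.Adj u w

/-- The auxiliary graph `H_v` is an `s`-skein with seagulls `(x i, y i, z i)`:
it is the disjoint union of `s` seagulls (paths on three vertices with middle
vertex `y i ∈ N1` and endpoints `x i, z i ∈ N2`) and isolated vertices. -/
def IsSkein (G : SimpleGraph V) (v : V) (s : ℕ) (x y z : Fin s → V) : Prop :=
  (∀ i, x i ∈ N2 G v ∧ y i ∈ N1 G v ∧ z i ∈ N2 G v) ∧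
  (∀ i, x i ≠ z i) ∧
  (∀ i j, i ≠ j → ({x i, y i, z i} ∩ {x j, y j, z j} : Set V) = ∅) ∧
  (∀ i, HvAdj G v (x i) (y i) ∧ HvAdj G v (y i) (z i) ∧ ¬ HvAdj G v (x i) (z i)) ∧
  (∀ a b : V, HvAdj G v a b →
    ∃ i, (a = x i ∧ b = y i) ∨ (a = y i ∧ b = x i) ∨
         (a = y i ∧ b = z i) ∨ (a = z i ∧ b = y i))

theorem IsModulator.mem_of_isP3 {G : SimpleGraph V} {S : Set V} (hS : IsModulator G S)
    {p q r : V} (h : IsP3 G p q r) : p ∈ S ∨ q ∈ S ∨ r ∈ S := by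
  by_contra! hpqr
  obtain ⟨hp, hq, hr⟩ := hpqr
  obtain ⟨hpq, hqr, hpr, hne⟩ := h
  exact hS p q r ⟨⟨hpq, hp, hq⟩, ⟨hqr, hq, hr⟩, fun h' => hpr h'.1, hne⟩

theorem IsP3.symm {G : SimpleGraph V} {p q r : V} (h : IsP3 G p q r) : IsP3 G r q p :=
  ⟨h.2.1.symm, h.1.symm, fun h' => h.2.2.1 h'.symm, h.2.2.2.symm⟩

theorem isP3_of_mem_N1_of_mem_N2 {G : SimpleGraph V} {v a b : V} (ha : a ∈ N1 G v)
    (hb : b ∈ N2 G v) (hab : G.Adj a b) : IsP3 G v a b :=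
  ⟨ha, hab, hb.2.1, hb.1.symm⟩

namespace HvAdj

variable {G : SimpleGraph V} {v a b : V}

theorem symm (h : HvAdj G v a b) : HvAdj G v b a := by
  rcases h with ⟨ha, hb, hne, hnadj⟩ | ⟨ha, hb, hab⟩ | ⟨hb, ha, hab⟩
  · exact Or.inl ⟨hb, ha, hne.symm, fun h' => hnadj h'.symm⟩
  · exact Or.inr (Or.inr ⟨ha, hb, hab.symm⟩)
  · exact Or.inr (Or.inl ⟨hb, ha, hab.symm⟩)

theorem left_mem (h : HvAdj G v a b) : a ∈ N1 G v ∪ N2 G v := by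
  rcases h with ⟨ha, -⟩ | ⟨ha, -⟩ | ⟨-, ha, -⟩
  · exact Or.inl ha
  · exact Or.inl ha
  · exact Or.inr ha

theorem isP3 (h : HvAdj G v a b) : IsP3 G a v b ∨ IsP3 G v a b ∨ IsP3 G a b v := by
  rcases h with ⟨ha, hb, hne, hnadj⟩ | ⟨ha, hb, hab⟩ | ⟨hb, ha, hab⟩
  · exact Or.inl ⟨ha.symm, hb, hnadj, hne⟩
  · exact Or.inr (Or.inl (isP3_of_mem_N1_of_mem_N2 ha hb hab))
  · exact Or.inr (Or.inr (isP3_of_mem_N1_of_mem_N2 hb ha hab.symm).symm)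

end HvAdj

theorem stmt_2_general (G : SimpleGraph V) (v : V) (S : Set V)
    (hS : IsModulator G S) (hv : v ∉ S) :
    IsVCHv G v (S ∩ (N1 G v ∪ N2 G v)) := by
  refine ⟨Set.inter_subset_right, fun a b hab => ?_⟩
  have hS_ab : a ∈ S ∨ b ∈ S := by
    rcases hab.isP3 with h | h | h <;> have := hS.mem_of_isP3 h <;> tauto
  rcases hS_ab with ha | hb
  · exact Or.inl ⟨ha, hab.left_mem⟩
  · exact Or.inr ⟨hb, hab.symm.left_mem⟩

/-- If `S` is a modulator with `v ∉ S`, then `S ∩ (N1 ∪ N2)` is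
a vertex cover of `H_v`. -/
theorem stmt_2 [Fintype V] (G : SimpleGraph V) (v : V) (S : Set V)
    (hS : IsModulator G S) (hv : v ∉ S) :
    IsVCHv G v (S ∩ (N1 G v ∪ N2 G v)) :=
  stmt_2_general G v S hS hv
end

section
/- Let G be a finite simple undirected graph, let v be a vertex of G, and let H_v be the auxiliary graph of v. Let S be a modulator of G with v ∉ S, set X = S ∩ (N1 ∪ N2), and let Y be a vertex cover of H_v such that X ∩ N2 ⊆ Y ∩ N2. Then T = (S \ X) ∪ Y is also a modulator of G. -/
variable {V : Type*}

/-!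
Let `C = {v} ∪ (N1 \ Y)`. Since `Y` covers the non-edges inside `N1`, `C` is a clique, and since
`Y` covers the edges between `N1` and `N2`, every neighbour of `C` outside `Y` lies in `C`. So
in `G \ T` no edge leaves the clique `C \ T`, so a `P₃` of `G \ T` misses `C`.
Every vertex of `S \ T` lies in `X \ Y ⊆ N1 \ Y ⊆ C` (because `X ∩ N2 ⊆ Y`), so that `P₃` also
avoids `S` and would be a `P₃` of `G \ S`.
-/

theorem IsModulator.of_isClique_of_closed {G : SimpleGraph V} {S T C : Set V}
    (hS : IsModulator G S) (hC : G.IsClique C)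
    (hclosed : ∀ u w, u ∈ C → G.Adj u w → w ∉ T → w ∈ C) (hST : S \ T ⊆ C) :
    IsModulator G T := by
  rintro a b c ⟨⟨hab, haT, hbT⟩, ⟨hbc, -, hcT⟩, hac, hne⟩
  have hGac : ¬ G.Adj a c := fun h => hac ⟨h, haT, hcT⟩
  have hbC : b ∉ C := fun hb =>
    hGac (hC (hclosed b a hb hab.symm haT) (hclosed b c hb hbc hcT) hne)
  have haC : a ∉ C := fun ha => hbC (hclosed a b ha hab hbT)
  have hcC : c ∉ C := fun hc => hbC (hclosed c b hc hbc.symm hbT)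
  have hnotS : ∀ u, u ∉ T → u ∉ C → u ∉ S := fun u huT huC huS => huC (hST ⟨huS, huT⟩)
  exact hS a b c ⟨⟨hab, hnotS a haT haC, hnotS b hbT hbC⟩,
    ⟨hbc, hnotS b hbT hbC, hnotS c hcT hcC⟩, fun h => hGac h.1, hne⟩

section CoverOfHv

variable {G : SimpleGraph V} {v : V} {Y : Set V}

theorem isClique_insert_N1_diff (hY : ∀ a b, HvAdj G v a b → a ∈ Y ∨ b ∈ Y) :
    G.IsClique (insert v (N1 G v \ Y)) := by
  refine SimpleGraph.isClique_insert.mpr ⟨?_, fun u hu _ => hu.1⟩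
  intro u hu w hw huw
  by_contra hadj
  rcases hY u w (Or.inl ⟨hu.1, hw.1, huw, hadj⟩) with h | h
  exacts [hu.2 h, hw.2 h]

theorem mem_insert_N1_diff_of_adj (hY : ∀ a b, HvAdj G v a b → a ∈ Y ∨ b ∈ Y) {u w : V}
    (hu : u ∈ insert v (N1 G v \ Y)) (huw : G.Adj u w) (hw : w ∉ Y) :
    w ∈ insert v (N1 G v \ Y) := by
  rcases hu with rfl | ⟨hu, huY⟩
  · exact Or.inr ⟨huw, hw⟩
  by_cases hwv : w = v
  · exact Or.inl hwv
  by_cases hvw : G.Adj v w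
  · exact Or.inr ⟨hvw, hw⟩
  rcases hY u w (Or.inr (Or.inl ⟨hu, ⟨hwv, hvw, u, hu, huw⟩, huw⟩)) with h | h
  exacts [absurd h huY, absurd h hw]

end CoverOfHv

theorem stmt_4_general (G : SimpleGraph V) (v : V) (S X Y : Set V)
    (hS : IsModulator G S)
    (hX : X = S ∩ (N1 G v ∪ N2 G v))
    (hY : IsVCHv G v Y)
    (hXY : X ∩ N2 G v ⊆ Y ∩ N2 G v) :
    IsModulator G ((S \ X) ∪ Y) := by
  refine hS.of_isClique_of_closed (isClique_insert_N1_diff hY.2)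
    (fun u w hu huw hw => mem_insert_N1_diff_of_adj hY.2 hu huw fun h => hw (Or.inr h)) ?_
  rintro u ⟨huS, huT⟩
  have huX : u ∈ X := by
    by_contra h
    exact huT (Or.inl ⟨huS, h⟩)
  have huY : u ∉ Y := fun h => huT (Or.inr h)
  rcases (hX ▸ huX).2 with hu | hu
  · exact Or.inr ⟨hu, huY⟩
  · exact absurd (hXY ⟨huX, hu⟩).1 huY

/-- Let `S` be a modulator with `v ∉ S`, `X = S ∩ (N1 ∪ N2)`, and
let `Y` be a vertex cover of `H_v` with `X ∩ N2 ⊆ Y ∩ N2`. Then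
`T = (S \ X) ∪ Y` is also a modulator. -/
theorem stmt_4 [Fintype V] (G : SimpleGraph V) (v : V) (S X Y : Set V)
    (hS : IsModulator G S) (hv : v ∉ S)
    (hX : X = S ∩ (N1 G v ∪ N2 G v))
    (hY : IsVCHv G v Y)
    (hXY : X ∩ N2 G v ⊆ Y ∩ N2 G v) :
    IsModulator G ((S \ X) ∪ Y) :=
  stmt_4_general G v S X Y hS hX hY hXY
end

section
/- Let G be a finite simple undirected graph, let v be a vertex of G, and let H_v be the auxiliary graph of v. Let S be a modulator of G with v ∉ S and set X = S ∩ (N1 ∪ N2). Suppose Y is a vertex cover of H_v which either dominates X or is equivalent to X. Then T = (S \ X) ∪ Y is also a modulator of G and |T| ≤ |S|. -/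
variable {V : Type*}

/-!
Put `T = (S \ X) ∪ Y`. Since `Y` covers every edge of `H_v`, no edge of `G - T` leaves
`{v} ∪ N1` towards `N2`, so the component of `v` in `G - T` lies in `{v} ∪ (N1 \ Y)`, which is a
clique of `G` because `Y` also covers the non-edges inside `N1`. Every other vertex of `G - T`
avoids `S`: vertices of `S ∩ N1` outside `T` are joined to `v`, and `S ∩ N2 ⊆ Y`. Hence a `P₃`
of `G - T` either meets the clique around `v`, which is impossible, or is a `P₃` of `G - S`.
The bound `|T| ≤ |S|` follows from `|Y| ≤ |X|`.
-/

theorem Set.ncard_sdiff_union_le {α : Type*} {S X Y : Set α} (hS : S.Finite) (hXS : X ⊆ S)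
    (hYX : Y.ncard ≤ X.ncard) : (S \ X ∪ Y).ncard ≤ S.ncard :=
  calc (S \ X ∪ Y).ncard ≤ (S \ X).ncard + Y.ncard := Set.ncard_union_le _ _
    _ ≤ (S \ X).ncard + X.ncard := Nat.add_le_add_left hYX _
    _ = S.ncard := Set.ncard_sdiff_add_ncard_of_subset hXS hS

theorem IsP3.deleteSet_of_notMem {G : SimpleGraph V} {S T : Set V} {a b c : V}
    (h : IsP3 (G.deleteSet T) a b c) (ha : a ∉ S) (hb : b ∉ S) (hc : c ∉ S) :
    IsP3 (G.deleteSet S) a b c :=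
  ⟨⟨h.1.1, ha, hb⟩, ⟨h.2.1.1, hb, hc⟩, fun hac => h.2.2.1 ⟨hac.1, h.1.2.1, h.2.1.2.2⟩, h.2.2.2⟩

section AuxiliaryGraph

variable {G : SimpleGraph V} {v : V}

theorem self_notMem_N1_union_N2 : v ∉ N1 G v ∪ N2 G v := by
  rintro (h | h)
  · exact G.irrefl h
  · exact h.1 rfl

theorem sdiff_N2_eq_inter_N1 {Z : Set V} (hZ : Z ⊆ N1 G v ∪ N2 G v) :
    Z \ N2 G v = Z ∩ N1 G v := by
  ext a
  constructor
  · rintro ⟨ha, haN2⟩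
    exact ⟨ha, (hZ ha).resolve_right haN2⟩
  · rintro ⟨ha, haN1⟩
    exact ⟨ha, fun haN2 => haN2.2.1 haN1⟩

theorem ncard_eq_of_ncard_inter_N1_eq_of_inter_N2_eq {Z W : Set V}
    (hZ : Z ⊆ N1 G v ∪ N2 G v) (hW : W ⊆ N1 G v ∪ N2 G v)
    (h1 : (Z ∩ N1 G v).ncard = (W ∩ N1 G v).ncard) (h2 : Z ∩ N2 G v = W ∩ N2 G v)
    (hZf : Z.Finite := by toFinite_tac) (hWf : W.Finite := by toFinite_tac) :
    Z.ncard = W.ncard := by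
  rw [← Set.ncard_inter_add_ncard_sdiff_eq_ncard Z (N2 G v) hZf,
    ← Set.ncard_inter_add_ncard_sdiff_eq_ncard W (N2 G v) hWf,
    sdiff_N2_eq_inter_N1 hZ, sdiff_N2_eq_inter_N1 hW, h1, h2]

namespace IsVCHv

variable {Y T : Set V}

theorem self_notMem (hY : IsVCHv G v Y) : v ∉ Y :=
  fun h => self_notMem_N1_union_N2 (hY.1 h)

theorem not_hvAdj_of_notMem (hY : IsVCHv G v Y) (hYT : Y ⊆ T) {a b : V} (ha : a ∉ T)
    (hb : b ∉ T) : ¬ HvAdj G v a b := fun hab =>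
  (hY.2 a b hab).elim (fun h => ha (hYT h)) (fun h => hb (hYT h))

theorem eq_or_mem_N1_of_reachable (hY : IsVCHv G v Y) (hYT : Y ⊆ T) {u : V}
    (h : (G.deleteSet T).Reachable v u) : u = v ∨ u ∈ N1 G v := by
  replace h := (SimpleGraph.reachable_iff_reflTransGen v u).1 h
  induction h with
  | refl => exact Or.inl rfl
  | @tail b c _ hbc ih =>
    obtain ⟨hGbc, hbT, hcT⟩ := hbc
    rcases ih with rfl | hb
    · exact Or.inr hGbc
    by_contra! hc
    have hc2 : c ∈ N2 G v := ⟨hc.1, hc.2, b, hb, hGbc⟩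
    exact hY.not_hvAdj_of_notMem hYT hbT hcT (Or.inr (Or.inl ⟨hb, hc2, hGbc⟩))

theorem not_reachable_of_isP3 (hY : IsVCHv G v Y) (hYT : Y ⊆ T) {a b c : V}
    (hp : IsP3 (G.deleteSet T) a b c) : ¬ (G.deleteSet T).Reachable v b := by
  obtain ⟨hab, hbc, hac, hne⟩ := hp
  intro hb
  have hGac : ¬ G.Adj a c := fun h => hac ⟨h, hab.2.1, hbc.2.2⟩
  rcases hY.eq_or_mem_N1_of_reachable hYT (hb.trans hab.symm.reachable) with rfl | ha <;>
    rcases hY.eq_or_mem_N1_of_reachable hYT (hb.trans hbc.reachable) with rfl | hc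
  · exact hne rfl
  · exact hGac hc
  · exact hGac (G.adj_symm ha)
  · exact hY.not_hvAdj_of_notMem hYT hab.2.1 hbc.2.2 (Or.inl ⟨ha, hc, hne, hGac⟩)

end IsVCHv

theorem notMem_of_not_reachable_deleteSet {S Y : Set V} {x : V} (hv : v ∉ S)
    (hY : IsVCHv G v Y) (hSY : S ∩ N2 G v ⊆ Y) (hx : x ∉ S \ (N1 G v ∪ N2 G v) ∪ Y)
    (hr : ¬ (G.deleteSet (S \ (N1 G v ∪ N2 G v) ∪ Y)).Reachable v x) : x ∉ S := by
  intro hxS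
  have hvT : v ∉ S \ (N1 G v ∪ N2 G v) ∪ Y := by
    rintro (h | h)
    · exact hv h.1
    · exact hY.self_notMem h
  have hxN : x ∈ N1 G v ∪ N2 G v := by
    by_contra h
    exact hx (Or.inl ⟨hxS, h⟩)
  rcases hxN with hx1 | hx2
  · exact hr (SimpleGraph.Adj.reachable ⟨hx1, hvT, hx⟩)
  · exact hx (Or.inr (hSY ⟨hxS, hx2⟩))

theorem IsModulator.sdiff_union_of_isVCHv {S Y : Set V} (hS : IsModulator G S) (hv : v ∉ S)
    (hY : IsVCHv G v Y) (hSY : S ∩ N2 G v ⊆ Y) :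
    IsModulator G (S \ (N1 G v ∪ N2 G v) ∪ Y) := by
  intro a b c hp
  have hb := hY.not_reachable_of_isP3 Set.subset_union_right hp
  have hout := fun x => notMem_of_not_reachable_deleteSet (x := x) hv hY hSY
  exact hS a b c <| hp.deleteSet_of_notMem
    (hout a hp.1.2.1 fun h => hb (h.trans hp.1.reachable)) (hout b hp.1.2.2 hb)
    (hout c hp.2.1.2.2 fun h => hb (h.trans hp.2.1.symm.reachable))

end AuxiliaryGraph

/-- Let `S` be a modulator with `v ∉ S` and `X = S ∩ (N1 ∪ N2)`.
If `Y` is a vertex cover of `H_v` which dominates `X` or is equivalent to `X`,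
then `T = (S \ X) ∪ Y` is a modulator with `|T| ≤ |S|`. -/
theorem stmt_5 [Fintype V] (G : SimpleGraph V) (v : V) (S X Y : Set V)
    (hS : IsModulator G S) (hv : v ∉ S)
    (hX : X = S ∩ (N1 G v ∪ N2 G v))
    (hY : IsVCHv G v Y)
    (hdom :
      -- `Y` dominates `X`
      (Y.ncard ≤ X.ncard ∧ X ∩ N2 G v ⊆ Y ∩ N2 G v ∧
        (Y.ncard < X.ncard ∨ X ∩ N2 G v ⊂ Y ∩ N2 G v)) ∨
      -- or `Y` is equivalent to `X`
      (X ∩ N2 G v = Y ∩ N2 G v ∧ (X ∩ N1 G v).ncard = (Y ∩ N1 G v).ncard)) :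
    IsModulator G ((S \ X) ∪ Y) ∧ ((S \ X) ∪ Y).ncard ≤ S.ncard := by
  subst hX
  have hYX : Y.ncard ≤ (S ∩ (N1 G v ∪ N2 G v)).ncard := by
    rcases hdom with ⟨hle, -, -⟩ | ⟨hN2, hN1⟩
    · exact hle
    · exact (ncard_eq_of_ncard_inter_N1_eq_of_inter_N2_eq hY.1 Set.inter_subset_right
        hN1.symm hN2.symm).le
  have hXY : S ∩ (N1 G v ∪ N2 G v) ∩ N2 G v ⊆ Y ∩ N2 G v :=
    hdom.elim (·.2.1) (·.1.subset)
  have hSY : S ∩ N2 G v ⊆ Y := fun x hx => (hXY ⟨⟨hx.1, Or.inr hx.2⟩, hx.2⟩).1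
  refine ⟨?_, Set.ncard_sdiff_union_le S.toFinite Set.inter_subset_left hYX⟩
  rw [Set.sdiff_self_inter]
  exact hS.sdiff_union_of_isVCHv hv hY hSY
end

section
/- Let G be a finite simple undirected graph, let v be a vertex of G, and let H_v be the auxiliary graph of v. Suppose X is a vertex cover of H_v with v ∉ X. Then there exists a solution S (a minimum-size modulator of G) such that either v ∉ S, or |X \ S| ≥ 2. -/
variable {V : Type*}

/-! Take any solution `S` with `v ∈ S` and `|X \ S| ≤ 1`. Every `P₃` of `G` through `v`
contains an edge of `H_v` (inside `N1` if `v` is its middle vertex, between `N1` and `N2`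
otherwise), so it meets `X`; all other `P₃`s meet `S \ {v}`. Hence `(S \ {v}) ∪ X` is a
modulator of size at most `|S| - 1 + |X \ S| ≤ |S|`, i.e. a solution avoiding `v`. -/

theorem isP3_deleteSet_iff {G : SimpleGraph V} {T : Set V} {u m w : V} :
    IsP3 (G.deleteSet T) u m w ↔ IsP3 G u m w ∧ u ∉ T ∧ m ∉ T ∧ w ∉ T := by
  simp only [IsP3, SimpleGraph.deleteSet]
  tauto

theorem isModulator_iff {G : SimpleGraph V} {T : Set V} :
    IsModulator G T ↔ ∀ u m w, IsP3 G u m w → u ∈ T ∨ m ∈ T ∨ w ∈ T := by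
  simp only [IsModulator, IsClusterGraph, isP3_deleteSet_iff]
  grind

theorem IsP3.exists_hvAdj {G : SimpleGraph V} {u m w v : V} (h : IsP3 G u m w)
    (hv : v = u ∨ v = m ∨ v = w) :
    ∃ a ∈ ({u, m, w} : Set V), ∃ b ∈ ({u, m, w} : Set V), HvAdj G v a b := by
  obtain ⟨hum, hmw, hnuw, hne⟩ := h
  rcases hv with rfl | rfl | rfl
  · exact ⟨m, by simp, w, by simp, Or.inr <| Or.inl
      ⟨hum, ⟨hne.symm, hnuw, m, hum, hmw⟩, hmw⟩⟩
  · exact ⟨u, by simp, w, by simp, Or.inl ⟨hum.symm, hmw, hne, hnuw⟩⟩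
  · exact ⟨m, by simp, u, by simp, Or.inr <| Or.inl
      ⟨hmw.symm, ⟨hne, fun h => hnuw h.symm, m, hmw.symm, hum.symm⟩, hum.symm⟩⟩

theorem IsModulator.diff_singleton_union {G : SimpleGraph V} {v : V} {S X : Set V}
    (hS : IsModulator G S) (hX : ∀ a b, HvAdj G v a b → a ∈ X ∨ b ∈ X) :
    IsModulator G (S \ {v} ∪ X) := by
  rw [isModulator_iff] at hS ⊢
  intro u m w h
  by_cases hv : v = u ∨ v = m ∨ v = w
  · obtain ⟨a, ha, b, hb, hab⟩ := h.exists_hvAdj hv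
    rcases hX a b hab with hx | hx
    · rcases ha with rfl | rfl | rfl <;> simp [hx]
    · rcases hb with rfl | rfl | rfl <;> simp [hx]
  · push Not at hv
    rcases hS u m w h with hu | hm | hw
    · exact Or.inl (Or.inl ⟨hu, hv.1.symm⟩)
    · exact Or.inr (Or.inl (Or.inl ⟨hm, hv.2.1.symm⟩))
    · exact Or.inr (Or.inr (Or.inl ⟨hw, hv.2.2.symm⟩))

theorem exists_isSolution (G : SimpleGraph V) : ∃ S, IsSolution G S := by
  let modulators := {S : Set V | IsModulator G S}
  have huniv : Set.univ ∈ modulators := isModulator_iff.2 fun _ _ _ _ => Or.inl trivial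
  exact ⟨Function.argminOn Set.ncard modulators ⟨_, huniv⟩,
    Function.argminOn_mem Set.ncard modulators _,
    fun _ hT => Function.argminOn_le _ _ hT⟩

theorem IsSolution.of_isModulator_of_ncard_le {G : SimpleGraph V} {S T : Set V}
    (hS : IsSolution G S) (hT : IsModulator G T) (hTS : T.ncard ≤ S.ncard) :
    IsSolution G T :=
  ⟨hT, fun U hU => hTS.trans (hS.2 U hU)⟩

/-- If `X` is a vertex cover of `H_v` with `v ∉ X`, then there is a
solution `S` such that `v ∉ S` or `|X \ S| ≥ 2`. -/
theorem stmt_6 [Fintype V] (G : SimpleGraph V) (v : V) (X : Set V)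
    (hX : IsVCHv G v X) (hvX : v ∉ X) :
    ∃ S : Set V, IsSolution G S ∧ (v ∉ S ∨ 2 ≤ (X \ S).ncard) := by
  obtain ⟨S, hS⟩ := exists_isSolution G
  by_cases hvS : v ∉ S
  · exact ⟨S, hS, Or.inl hvS⟩
  by_cases hXS : 2 ≤ (X \ S).ncard
  · exact ⟨S, hS, Or.inr hXS⟩
  push Not at hvS hXS
  have hsub : S \ {v} ∪ X ⊆ S \ {v} ∪ X \ S := by grind
  have hcard : (S \ {v} ∪ X).ncard ≤ S.ncard :=
    calc (S \ {v} ∪ X).ncard ≤ (S \ {v} ∪ X \ S).ncard := Set.ncard_le_ncard hsub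
      _ ≤ (S \ {v}).ncard + (X \ S).ncard := Set.ncard_union_le _ _
      _ = S.ncard - 1 + (X \ S).ncard := by rw [Set.ncard_sdiff_singleton_of_mem hvS]
      _ ≤ S.ncard := by have := (Set.ncard_pos (Set.toFinite S)).2 ⟨v, hvS⟩; omega
  exact ⟨S \ {v} ∪ X, hS.of_isModulator_of_ncard_le (hS.1.diff_singleton_union hX.2) hcard,
    Or.inl (by simp [hvX])⟩
end

section
/- Let G be a finite simple undirected graph, let v be a vertex of G, and let H_v be the auxiliary graph of v. Let C be a cycle in H_v on 2l vertices (l ≥ 2) whose vertices alternate between N1 and N2, so that |C ∩ N2| = l. If S is a modulator of G with v ∉ S, then T = (S \ V(C)) ∪ (C ∩ N2) is also a modulator of G, and |T| ≤ |S|. -/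
variable {V : Type*}

/-! Every vertex of `C` that survives in `G \ T` lies in `N1` and, because its `H_v`-neighbours
are exactly its two cycle neighbours in `N2 ⊆ T`, it is a true twin of `v` in `G \ T`. Moving each
such vertex onto `v` therefore turns any `P₃` of `G \ T` into a `P₃` of `G \ S` avoiding `C`, so `T`
is a modulator. For the size bound, `S` covers the `2l` edges of the cycle in `H_v` (each is a
`P₃` through `v`), so it contains at least `l = |C ∩ N2|` vertices of `C`. -/

namespace SimpleGraph

/-- Closed adjacency; a graph is a cluster graph iff this relation is transitive. -/
def AdjOrEq (G : SimpleGraph V) (a b : V) : Prop := a = b ∨ G.Adj a b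

lemma AdjOrEq.symm {G : SimpleGraph V} {a b : V} (h : G.AdjOrEq a b) : G.AdjOrEq b a :=
  h.imp Eq.symm fun h => h.symm

lemma adjOrEq_comm {G : SimpleGraph V} {a b : V} : G.AdjOrEq a b ↔ G.AdjOrEq b a :=
  ⟨AdjOrEq.symm, AdjOrEq.symm⟩

lemma deleteSet_adjOrEq_iff {G : SimpleGraph V} {S : Set V} {a b : V} (ha : a ∉ S) (hb : b ∉ S) :
    (G.deleteSet S).AdjOrEq a b ↔ G.AdjOrEq a b :=
  show (a = b ∨ G.Adj a b ∧ a ∉ S ∧ b ∉ S) ↔ _ by simp only [ha, hb, not_false_eq_true, and_true]; rfl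

end SimpleGraph

open SimpleGraph

lemma isP3_iff_adjOrEq {G : SimpleGraph V} {a b c : V} :
    IsP3 G a b c ↔ G.AdjOrEq a b ∧ G.AdjOrEq b c ∧ ¬ G.AdjOrEq a c := by
  unfold IsP3 AdjOrEq
  constructor
  · rintro ⟨hab, hbc, hac, hne⟩
    exact ⟨Or.inr hab, Or.inr hbc, by simp [hne, hac]⟩
  · rintro ⟨hab | hab, hbc | hbc, hac⟩ <;> subst_vars <;> simp_all

lemma IsClusterGraph.of_adjOrEq_iff {W : Type*} {G : SimpleGraph V} {H : SimpleGraph W}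
    (hH : IsClusterGraph H) (φ : V → W) {U : Set V} (hU : ∀ a b, G.Adj a b → a ∈ U)
    (hφ : ∀ a ∈ U, ∀ b ∈ U, G.AdjOrEq a b ↔ H.AdjOrEq (φ a) (φ b)) : IsClusterGraph G := by
  intro a b c hP
  have ha := hU _ _ hP.1
  have hb := hU _ _ hP.2.1
  have hc := hU _ _ hP.2.1.symm
  rw [isP3_iff_adjOrEq, hφ a ha b hb, hφ b hb c hc, hφ a ha c hc] at hP
  exact hH _ _ _ (isP3_iff_adjOrEq.2 hP)

section

variable {G : SimpleGraph V} {v : V}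

lemma notMem_N2_of_mem_N1 {a : V} (ha : a ∈ N1 G v) : a ∉ N2 G v :=
  fun h => h.2.1 ha

lemma adjOrEq_iff_of_not_hvAdj {x z : V} (hx : x ∈ N1 G v) (hxz : ¬ HvAdj G v x z) :
    G.AdjOrEq x z ↔ G.AdjOrEq v z := by
  have hvx : G.Adj v x := hx
  constructor
  · rintro (rfl | hadj)
    · exact Or.inr hvx
    by_cases hzv : z = v
    · exact Or.inl hzv.symm
    by_contra hvz
    exact hxz (Or.inr (Or.inl ⟨hx, ⟨hzv, fun h => hvz (Or.inr h), x, hvx, hadj⟩, hadj⟩))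
  · rintro (rfl | hvz)
    · exact Or.inr hvx.symm
    by_contra hxz'
    exact hxz (Or.inl ⟨hx, hvz, fun h => hxz' (Or.inl h), fun h => hxz' (Or.inr h)⟩)

lemma IsModulator.isVCHv {S : Set V} (hS : IsModulator G S) (hv : v ∉ S) :
    IsVCHv G v (S ∩ (N1 G v ∪ N2 G v)) := by
  refine ⟨Set.inter_subset_right, fun a b hab => ?_⟩
  have hN : a ∈ N1 G v ∪ N2 G v ∧ b ∈ N1 G v ∪ N2 G v := by
    rcases hab with ⟨ha, hb, -⟩ | ⟨ha, hb, -⟩ | ⟨hb, ha, -⟩ <;> simp [ha, hb]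
  suffices a ∈ S ∨ b ∈ S from this.imp (⟨·, hN.1⟩) (⟨·, hN.2⟩)
  by_contra! hab'
  obtain ⟨haS, hbS⟩ := hab'
  have hP3 : ∀ p q r, p ∉ S → q ∉ S → r ∉ S → IsP3 G p q r → False :=
    fun p q r hp hq hr ⟨h1, h2, h3, h4⟩ => hS p q r ⟨⟨h1, hp, hq⟩, ⟨h2, hq, hr⟩, fun h => h3 h.1, h4⟩
  rcases hab with ⟨ha, hb, hne, hadj⟩ | ⟨ha, hb, hadj⟩ | ⟨hb, ha, hadj⟩
  · exact hP3 a v b haS hv hbS ⟨G.adj_symm ha, hb, hadj, hne⟩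
  · exact hP3 v a b hv haS hbS ⟨ha, hadj, hb.2.1, hb.1.symm⟩
  · exact hP3 v b a hv hbS haS ⟨hb, hadj.symm, ha.2.1, ha.1.symm⟩

end

lemma ZMod.val_add_one_mod_two {l : ℕ} [NeZero l] (i : ZMod (2 * l)) :
    (i + 1).val % 2 = (i.val + 1) % 2 := by
  have h2 : 2 ∣ 2 * l := dvd_mul_right 2 l
  rw [ZMod.val_add, ZMod.val_one_eq_one_mod, Nat.mod_mod_of_dvd _ h2, Nat.add_mod,
    Nat.mod_mod_of_dvd _ h2, ← Nat.add_mod]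

lemma le_two_mul_ncard_inter_range {n : ℕ} [NeZero n] {S : Set V} {c : ZMod n → V}
    (hc : Function.Injective c) (hS : ∀ i, c i ∈ S ∨ c (i + 1) ∈ S) :
    n ≤ 2 * (S ∩ Set.range c).ncard := by
  set A : Set (ZMod n) := {i | c i ∈ S}
  have hcover : Set.univ ⊆ A ∪ (· - 1) '' A := fun i _ =>
    (hS i).imp id fun h => ⟨i + 1, h, add_sub_cancel_right i 1⟩
  have hA : A.ncard ≤ (S ∩ Set.range c).ncard := by
    rw [← Set.ncard_image_of_injective A hc]
    exact Set.ncard_le_ncard (Set.image_subset_iff.2 fun i hi => ⟨hi, i, rfl⟩)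
  calc n = (Set.univ : Set (ZMod n)).ncard := by rw [Set.ncard_univ, Nat.card_zmod]
    _ ≤ (A ∪ (· - 1) '' A).ncard := Set.ncard_le_ncard hcover
    _ ≤ A.ncard + ((· - 1) '' A).ncard := Set.ncard_union_le _ _
    _ ≤ A.ncard + A.ncard := Nat.add_le_add_left Set.ncard_image_le _
    _ ≤ 2 * (S ∩ Set.range c).ncard := by omega

section

variable {G : SimpleGraph V} {v : V} {l : ℕ} {c : ZMod (2 * l) → V}

lemma cycle_mem_N1_or_mem_N2
    (halt : ∀ i : ZMod (2 * l),
      (i.val % 2 = 0 → c i ∈ N1 G v) ∧ (i.val % 2 = 1 → c i ∈ N2 G v))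
    (i : ZMod (2 * l)) : c i ∈ N1 G v ∨ c i ∈ N2 G v :=
  (Nat.mod_two_eq_zero_or_one i.val).imp (halt i).1 (halt i).2

lemma cycle_add_one_sub_one_mem_N2 [NeZero l]
    (halt : ∀ i : ZMod (2 * l),
      (i.val % 2 = 0 → c i ∈ N1 G v) ∧ (i.val % 2 = 1 → c i ∈ N2 G v))
    {i : ZMod (2 * l)} (hi : c i ∈ N1 G v) : c (i + 1) ∈ N2 G v ∧ c (i - 1) ∈ N2 G v := by
  have heven : i.val % 2 = 0 := by
    by_contra h
    exact notMem_N2_of_mem_N1 hi ((halt i).2 (by omega))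
  refine ⟨(halt _).2 ?_, (halt _).2 ?_⟩
  · rw [ZMod.val_add_one_mod_two]
    omega
  · have h := ZMod.val_add_one_mod_two (i - 1)
    rw [sub_add_cancel] at h
    omega

lemma cycle_not_hvAdj [NeZero l]
    (hcomp : ∀ (i : ZMod (2 * l)) (b : V), HvAdj G v (c i) b → b = c (i + 1) ∨ b = c (i - 1))
    (halt : ∀ i : ZMod (2 * l),
      (i.val % 2 = 0 → c i ∈ N1 G v) ∧ (i.val % 2 = 1 → c i ∈ N2 G v))
    {i : ZMod (2 * l)} (hi : c i ∈ N1 G v) {z : V} (hz : z ∉ Set.range c ∩ N2 G v) :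
    ¬ HvAdj G v (c i) z := by
  intro h
  obtain ⟨hsucc, hpred⟩ := cycle_add_one_sub_one_mem_N2 halt hi
  rcases hcomp i z h with rfl | rfl
  · exact hz ⟨⟨_, rfl⟩, hsucc⟩
  · exact hz ⟨⟨_, rfl⟩, hpred⟩

lemma isModulator_sdiff_range_union [NeZero l]
    (hcomp : ∀ (i : ZMod (2 * l)) (b : V), HvAdj G v (c i) b → b = c (i + 1) ∨ b = c (i - 1))
    (halt : ∀ i : ZMod (2 * l),
      (i.val % 2 = 0 → c i ∈ N1 G v) ∧ (i.val % 2 = 1 → c i ∈ N2 G v))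
    {S : Set V} (hS : IsModulator G S) (hv : v ∉ S) :
    IsModulator G ((S \ Set.range c) ∪ (Set.range c ∩ N2 G v)) := by
  classical
  set C := Set.range c
  set X := C ∩ N2 G v
  set T := S \ C ∪ X
  have hvT : v ∉ T := by
    rintro (h | h)
    exacts [hv h.1, h.2.1 rfl]
  let φ : V → V := fun x => if x ∈ C then v else x
  have hφ : ∀ a ∉ T, φ a ∉ S ∧ φ a ∉ T ∧ ∀ z ∉ X, G.AdjOrEq a z ↔ G.AdjOrEq (φ a) z := by
    intro a haT
    by_cases haC : a ∈ C
    · obtain ⟨i, rfl⟩ := haC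
      have hi : c i ∈ N1 G v := (cycle_mem_N1_or_mem_N2 halt i).resolve_right
        fun h => haT (Or.inr ⟨⟨i, rfl⟩, h⟩)
      rw [show φ (c i) = v from if_pos ⟨i, rfl⟩]
      exact ⟨hv, hvT, fun z hz => adjOrEq_iff_of_not_hvAdj hi (cycle_not_hvAdj hcomp halt hi hz)⟩
    · rw [show φ a = a from if_neg haC]
      exact ⟨fun h => haT (Or.inl ⟨h, haC⟩), haT, fun _ _ => Iff.rfl⟩
  have hX : ∀ z ∉ T, z ∉ X := fun z hz h => hz (Or.inr h)
  refine IsClusterGraph.of_adjOrEq_iff hS φ (U := Tᶜ) (fun a b h => h.2.1) fun a haT b hbT => ?_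
  obtain ⟨haS, haT', ha⟩ := hφ a haT
  obtain ⟨hbS, -, hb⟩ := hφ b hbT
  rw [deleteSet_adjOrEq_iff haT hbT, deleteSet_adjOrEq_iff haS hbS, ha b (hX b hbT), adjOrEq_comm,
    hb _ (hX _ haT'), adjOrEq_comm]

end

lemma ncard_sdiff_range_union_le {l : ℕ} [NeZero l] {S X : Set V} {c : ZMod (2 * l) → V}
    (hc : Function.Injective c) (hS : ∀ i, c i ∈ S ∨ c (i + 1) ∈ S) (hX : X.ncard ≤ l)
    (hSf : S.Finite) : ((S \ Set.range c) ∪ X).ncard ≤ S.ncard := by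
  have hSC := le_two_mul_ncard_inter_range hc hS
  calc ((S \ Set.range c) ∪ X).ncard ≤ (S \ Set.range c).ncard + X.ncard := Set.ncard_union_le _ _
    _ ≤ (S ∩ Set.range c).ncard + (S \ Set.range c).ncard := by omega
    _ = S.ncard := Set.ncard_inter_add_ncard_sdiff_eq_ncard _ _ hSf

/-- Let `C` be a cycle in `H_v` on `2l` vertices (`l ≥ 2`), being a
connected component of `H_v`, whose vertices alternate between `N1` and `N2`
(so `|C ∩ N2| = l`). If `S` is a modulator with `v ∉ S`, then
`T = (S \ V(C)) ∪ (C ∩ N2)` is a modulator with `|T| ≤ |S|`. -/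
theorem stmt_11 [Fintype V] (G : SimpleGraph V) (v : V) (l : ℕ) (hl : 2 ≤ l)
    (c : ZMod (2 * l) → V)
    (hinj : Function.Injective c)
    (hcyc : ∀ i : ZMod (2 * l), HvAdj G v (c i) (c (i + 1)))
    (hcomp : ∀ (i : ZMod (2 * l)) (b : V),
      HvAdj G v (c i) b → b = c (i + 1) ∨ b = c (i - 1))
    (halt : ∀ i : ZMod (2 * l),
      (i.val % 2 = 0 → c i ∈ N1 G v) ∧ (i.val % 2 = 1 → c i ∈ N2 G v))
    (hcard : (Set.range c ∩ N2 G v).ncard = l)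
    (S : Set V) (hS : IsModulator G S) (hv : v ∉ S) :
    IsModulator G ((S \ Set.range c) ∪ (Set.range c ∩ N2 G v)) ∧
      ((S \ Set.range c) ∪ (Set.range c ∩ N2 G v)).ncard ≤ S.ncard := by
  have : NeZero l := ⟨by omega⟩
  have hcover : ∀ i, c i ∈ S ∨ c (i + 1) ∈ S := fun i =>
    ((hS.isVCHv hv).2 _ _ (hcyc i)).imp And.left And.left
  exact ⟨isModulator_sdiff_range_union hcomp halt hS hv,
    ncard_sdiff_range_union_le hinj hcover hcard.le S.toFinite⟩
end
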